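/- arXiv:2508.11118 — 2 statements merged into one kernel-verified Lean document; each statement's English description precedes it below -/
import Mathlib

section
/- Let z = (z₁,z₂) ∈ ℝ², z ≠ (0,0), and let A(z) be the 2×2 matrix with entries a₁₁ = (z₁²+3z₂²)z₁/((z₁²+z₂²)^{3/2}), a₁₂ = −(3z₁²+z₂²)z₂/((z₁²+z₂²)^{3/2}), a₂₁ = 2z₂³/((z₁²+z₂²)^{3/2}), a₂₂ = 2z₁³/((z₁²+z₂²)^{3/2}). Then ‖A(z)y‖ ≥ ‖y‖ for every y ∈ ℝ². -/
/-!
Writing `r = ‖z‖`, every entry of `A(z)` is a cubic form in `z` divided by `r³`, and a polynomial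
identity gives `‖A(z) y‖² = ‖y‖² + 3 (z₂ y₁ - z₁ y₂)² / r²`.
-/

lemma sq_add_sq_pos_of_pair_ne_zero {a b : ℝ} (h : (a, b) ≠ (0, 0)) : 0 < a ^ 2 + b ^ 2 := by
  rcases ne_or_eq a 0 with ha | rfl
  · positivity
  · have hb : b ≠ 0 := by simpa using h
    positivity

lemma coderivative_numerator_identity (a b y₁ y₂ : ℝ) :
    ((a ^ 2 + 3 * b ^ 2) * a * y₁ + -((3 * a ^ 2 + b ^ 2) * b) * y₂) ^ 2
      + (2 * b ^ 3 * y₁ + 2 * a ^ 3 * y₂) ^ 2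
    = (a ^ 2 + b ^ 2) ^ 3 * (y₁ ^ 2 + y₂ ^ 2) + 3 * (a ^ 2 + b ^ 2) ^ 2 * (b * y₁ - a * y₂) ^ 2 := by
  ring

lemma div_sqrt_pow_three_sq {s : ℝ} (hs : 0 ≤ s) (u : ℝ) : (u / √s ^ 3) ^ 2 = u ^ 2 / s ^ 3 := by
  rw [div_pow, ← pow_mul, mul_comm, pow_mul, Real.sq_sqrt hs]

lemma coderivative_sq_norm_eq {z₁ z₂ : ℝ} (hz : (z₁, z₂) ≠ (0, 0)) (y₁ y₂ : ℝ) :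
    ((z₁ ^ 2 + 3 * z₂ ^ 2) * z₁ / √(z₁ ^ 2 + z₂ ^ 2) ^ 3 * y₁
        + -((3 * z₁ ^ 2 + z₂ ^ 2) * z₂) / √(z₁ ^ 2 + z₂ ^ 2) ^ 3 * y₂) ^ 2
      + (2 * z₂ ^ 3 / √(z₁ ^ 2 + z₂ ^ 2) ^ 3 * y₁
        + 2 * z₁ ^ 3 / √(z₁ ^ 2 + z₂ ^ 2) ^ 3 * y₂) ^ 2
    = y₁ ^ 2 + y₂ ^ 2 + 3 * (z₂ * y₁ - z₁ * y₂) ^ 2 / (z₁ ^ 2 + z₂ ^ 2) := by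
  have hs := sq_add_sq_pos_of_pair_ne_zero hz
  simp only [div_mul_eq_mul_div, ← add_div, div_sqrt_pow_three_sq hs.le,
    coderivative_numerator_identity]
  field_simp

/-- `‖A(z) y‖ ≥ ‖y‖` for the coderivative matrix `A(z)` of `f` at `z ≠ 0`. -/
theorem coderivative_norm_ge (z₁ z₂ y₁ y₂ : ℝ) (hz : (z₁, z₂) ≠ (0, 0)) :
    Real.sqrt (((z₁ ^ 2 + 3 * z₂ ^ 2) * z₁ / Real.sqrt (z₁ ^ 2 + z₂ ^ 2) ^ 3 * y₁
        + -((3 * z₁ ^ 2 + z₂ ^ 2) * z₂) / Real.sqrt (z₁ ^ 2 + z₂ ^ 2) ^ 3 * y₂) ^ 2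
      + (2 * z₂ ^ 3 / Real.sqrt (z₁ ^ 2 + z₂ ^ 2) ^ 3 * y₁
        + 2 * z₁ ^ 3 / Real.sqrt (z₁ ^ 2 + z₂ ^ 2) ^ 3 * y₂) ^ 2)
    ≥ Real.sqrt (y₁ ^ 2 + y₂ ^ 2) := by
  rw [coderivative_sq_norm_eq hz]
  exact Real.sqrt_le_sqrt (le_add_of_nonneg_right (by positivity))
end

section
/- Let g : ℝ⁴ → ℝ⁴ be defined by g(x₁,x₂,x₃,x₄) = ((x₁²−x₂²)/√(x₁²+x₂²), 2x₁x₂/√(x₁²+x₂²), (x₃²−x₄²)/√(x₃²+x₄²), 2x₃x₄/√(x₃²+x₄²)), with the convention that a pair maps to (0,0) when it equals (0,0). If z = (z₁,z₂,z₃,z₄) satisfies (z₁²+z₂²)(z₃²+z₄²) = 0, then g is not Fréchet differentiable at z. -/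
open Classical in
noncomputable def g : EuclideanSpace ℝ (Fin 4) → EuclideanSpace ℝ (Fin 4) := fun x =>
  WithLp.toLp 2 (fun i => ![if x 0 = 0 ∧ x 1 = 0 then 0 else
        (x 0 ^ 2 - x 1 ^ 2) / Real.sqrt (x 0 ^ 2 + x 1 ^ 2),
      if x 0 = 0 ∧ x 1 = 0 then 0 else
        2 * x 0 * x 1 / Real.sqrt (x 0 ^ 2 + x 1 ^ 2),
      if x 2 = 0 ∧ x 3 = 0 then 0 else
        (x 2 ^ 2 - x 3 ^ 2) / Real.sqrt (x 2 ^ 2 + x 3 ^ 2),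
      if x 2 = 0 ∧ x 3 = 0 then 0 else
        2 * x 2 * x 3 / Real.sqrt (x 2 ^ 2 + x 3 ^ 2)] i)

/-! If `z₁ = z₂ = 0`, then along the line `t ↦ z + t e₁` the first coordinate of `g` is `|t|`,
because `g` sends the pair `(t, 0)` to `(|t|, 0)`; so `g` is not differentiable at `z`.
The case `z₃ = z₄ = 0` is the same with the second pair of coordinates. -/

theorem not_differentiableAt_of_apply_add_smul_eq_abs {E F : Type*}
    [NormedAddCommGroup E] [NormedSpace ℝ E] [NormedAddCommGroup F] [NormedSpace ℝ F]
    {f : E → F} {x : E} (ℓ : F →L[ℝ] ℝ) (v : E) (hf : ∀ t : ℝ, ℓ (f (x + t • v)) = |t|) :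
    ¬ DifferentiableAt ℝ f x := by
  intro hfx
  have hline : DifferentiableAt ℝ (fun t : ℝ => x + t • v) 0 :=
    (differentiableAt_id.smul_const v).const_add x
  have hfx' : DifferentiableAt ℝ f (x + (0 : ℝ) • v) := by simpa using hfx
  have hcomp : DifferentiableAt ℝ (fun t : ℝ => ℓ (f (x + t • v))) 0 :=
    ℓ.differentiableAt.comp 0 (hfx'.comp 0 hline)
  exact not_differentiableAt_abs_zero (by simpa only [hf] using hcomp)

/-- On the plane `x₁ = x₂ = 0` the convention value `0` agrees with the formula: `0 / 0 = 0`. -/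
theorem g_apply_zero (x : EuclideanSpace ℝ (Fin 4)) :
    g x 0 = (x 0 ^ 2 - x 1 ^ 2) / √(x 0 ^ 2 + x 1 ^ 2) := by
  change ite _ _ _ = _
  split_ifs with h
  · simp [h.1, h.2]
  · rfl

theorem g_apply_two (x : EuclideanSpace ℝ (Fin 4)) :
    g x 2 = (x 2 ^ 2 - x 3 ^ 2) / √(x 2 ^ 2 + x 3 ^ 2) := by
  change ite _ _ _ = _
  split_ifs with h
  · simp [h.1, h.2]
  · rfl

theorem sq_add_sq_eq_zero {R : Type*} [Ring R] [LinearOrder R] [IsStrictOrderedRing R]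
    {a b : R} : a ^ 2 + b ^ 2 = 0 ↔ a = 0 ∧ b = 0 := by
  simpa only [sq] using mul_self_add_mul_self_eq_zero

theorem g_not_differentiable (z : EuclideanSpace ℝ (Fin 4))
    (hz : (z 0 ^ 2 + z 1 ^ 2) * (z 2 ^ 2 + z 3 ^ 2) = 0) :
    ¬ DifferentiableAt ℝ g z := by
  rcases mul_eq_zero.1 hz with h | h
  · obtain ⟨h0, h1⟩ := sq_add_sq_eq_zero.mp h
    refine not_differentiableAt_of_apply_add_smul_eq_abs (EuclideanSpace.proj 0)
      (EuclideanSpace.single 0 1) fun t => ?_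
    simpa [g_apply_zero, h0, h1] using Real.sqrt_sq_eq_abs t
  · obtain ⟨h2, h3⟩ := sq_add_sq_eq_zero.mp h
    refine not_differentiableAt_of_apply_add_smul_eq_abs (EuclideanSpace.proj 2)
      (EuclideanSpace.single 2 1) fun t => ?_
    simpa [g_apply_two, h2, h3] using Real.sqrt_sq_eq_abs t
end
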